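/- Every invertible n×n complex matrix A admits a unique decomposition A = E H U where E is elliptic (diagonalizable with all eigenvalues of modulus 1), H is hyperbolic (diagonalizable with all eigenvalues real and positive), U is unipotent (all eigenvalues equal to 1), and E, H, U pairwise commute. -/

import Mathlib

open Matrix Filter Topology
open scoped ComplexOrder

/-- `matAbs X = (Xᴴ X)^{1/2}`, the positive semidefinite part of the polar decomposition. -/
noncomputable def matAbs {n : ℕ} (X : Matrix (Fin n) (Fin n) ℂ) : Matrix (Fin n) (Fin n) ℂ :=
  (Matrix.posSemidef_conjTranspose_mul_self X).1.eigenvectorUnitary.1 *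
    Matrix.diagonal ((↑) ∘ Real.sqrt ∘ (Matrix.posSemidef_conjTranspose_mul_self X).1.eigenvalues) *
    (star (Matrix.posSemidef_conjTranspose_mul_self X).1.eigenvectorUnitary : Matrix (Fin n) (Fin n) ℂ)

/-- The largest singular value (spectral norm). -/
noncomputable def sMax {n : ℕ} (B : Matrix (Fin n) (Fin n) ℂ) : ℝ :=
  ⨆ i, Real.sqrt ((Matrix.posSemidef_conjTranspose_mul_self B).1.eigenvalues i)

/-- The smallest singular value. -/
noncomputable def sMin {n : ℕ} (B : Matrix (Fin n) (Fin n) ℂ) : ℝ :=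
  ⨅ i, Real.sqrt ((Matrix.posSemidef_conjTranspose_mul_self B).1.eigenvalues i)

/-- The spectral radius: the largest modulus of an eigenvalue. -/
noncomputable def specRad {n : ℕ} (B : Matrix (Fin n) (Fin n) ℂ) : ℝ :=
  sSup ((fun z => ‖z‖) '' spectrum ℂ B)

/-- A matrix is elliptic if it is diagonalizable with all eigenvalues of modulus one. -/
def Elliptic {n : ℕ} (E : Matrix (Fin n) (Fin n) ℂ) : Prop :=
  ∃ (M : Matrix (Fin n) (Fin n) ℂ) (t : Fin n → ℂ),
    IsUnit M.det ∧ (∀ i, ‖t i‖ = 1) ∧ E = M * Matrix.diagonal t * M⁻¹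

/-- A matrix is hyperbolic if it is diagonalizable with all eigenvalues real and positive. -/
def Hyperbolic {n : ℕ} (H : Matrix (Fin n) (Fin n) ℂ) : Prop :=
  ∃ (M : Matrix (Fin n) (Fin n) ℂ) (t : Fin n → ℝ),
    IsUnit M.det ∧ (∀ i, 0 < t i) ∧ H = M * Matrix.diagonal (fun i => (t i : ℂ)) * M⁻¹

/-- A matrix is unipotent if all its eigenvalues are one, i.e. `U - 1` is nilpotent. -/
def Unipotent {n : ℕ} (U : Matrix (Fin n) (Fin n) ℂ) : Prop :=
  IsNilpotent (U - 1)

/-- The Euclidean norm on `ℂⁿ`. -/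
noncomputable def enorm {n : ℕ} (v : Fin n → ℂ) : ℝ :=
  Real.sqrt (∑ i, ‖v i‖ ^ 2)


namespace CMJD
open Polynomial

variable {n : ℕ}

abbrev Mat (n : ℕ) := Matrix (Fin n) (Fin n) ℂ


/-- Conjugation by a unit as an algebra automorphism. -/
noncomputable def conjAE (u : (Mat n)ˣ) : Mat n ≃ₐ[ℂ] Mat n where
  toFun X := ↑u * X * ↑u⁻¹
  invFun X := ↑u⁻¹ * X * ↑u
  left_inv X := by
    simp only [← mul_assoc]
    rw [Units.inv_mul, one_mul, mul_assoc, Units.inv_mul, mul_one]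
  right_inv X := by
    simp only [← mul_assoc]
    rw [Units.mul_inv, one_mul, mul_assoc, Units.mul_inv, mul_one]
  map_mul' X Y := by
    have h : (↑u⁻¹ * ↑u : Mat n) = 1 := u.inv_mul
    calc ↑u * (X * Y) * ↑u⁻¹ = ↑u * X * (↑u⁻¹ * ↑u) * Y * ↑u⁻¹ := by
          rw [h, mul_one]; simp only [mul_assoc]
    _ = (↑u * X * ↑u⁻¹) * (↑u * Y * ↑u⁻¹) := by simp only [mul_assoc]
  map_add' X Y := by
    show ↑u * (X + Y) * ↑u⁻¹ = ↑u * X * ↑u⁻¹ + ↑u * Y * ↑u⁻¹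
    rw [mul_add, add_mul]
  commutes' r := by
    show ↑u * algebraMap ℂ (Mat n) r * ↑u⁻¹ = algebraMap ℂ (Mat n) r
    rw [Algebra.algebraMap_eq_smul_one, mul_smul_comm, mul_one, smul_mul_assoc, Units.mul_inv]

lemma conjAE_apply (u : (Mat n)ˣ) (X : Mat n) : conjAE u X = ↑u * X * ↑u⁻¹ := rfl

lemma aeval_conj {M : Mat n} (hM : IsUnit M.det) (X : Mat n) (p : ℂ[X]) :
    aeval (M * X * M⁻¹) p = M * aeval X p * M⁻¹ := by
  lift M to (Mat n)ˣ using (isUnit_iff_isUnit_det M).mpr hM with u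
  rw [← Matrix.coe_units_inv, ← conjAE_apply, ← conjAE_apply]
  exact aeval_algHom_apply (conjAE u) X p

lemma aeval_diagonal (t : Fin n → ℂ) (p : ℂ[X]) :
    aeval (diagonal t) p = diagonal (fun i => p.eval (t i)) := by
  induction p using Polynomial.induction_on' with
  | add p q hp hq => simp [hp, hq, diagonal_add]
  | monomial k a =>
      simp only [aeval_monomial, eval_monomial]
      rw [diagonal_pow, Matrix.algebraMap_eq_diagonal, diagonal_mul_diagonal]
      congr 1

lemma spectrum_conj {M : Mat n} (hM : IsUnit M.det) (X : Mat n) :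
    spectrum ℂ (M * X * M⁻¹) = spectrum ℂ X := by
  lift M to (Mat n)ˣ using (isUnit_iff_isUnit_det M).mpr hM with u
  rw [← Matrix.coe_units_inv, spectrum.units_conjugate]

noncomputable abbrev φ : Mat n ≃ₐ[ℂ] Module.End ℂ (Fin n → ℂ) := Matrix.toLinAlgEquiv'

lemma semisimple_of_diag {M : Mat n} (hM : IsUnit M.det) (t : Fin n → ℂ) :
    (φ (M * diagonal t * M⁻¹)).IsSemisimple := by
  classical
  set p : ℂ[X] := ∏ c ∈ Finset.image t Finset.univ, (Polynomial.X - C c) with hp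
  have hsq : Squarefree p := by
    have : p = ∏ c : (Finset.image t Finset.univ : Finset ℂ), (Polynomial.X - C (c : ℂ)) := by
      rw [hp, ← Finset.prod_coe_sort]
    rw [this]
    exact (separable_prod_X_sub_C_iff.mpr Subtype.val_injective).squarefree
  have heval : ∀ i, p.eval (t i) = 0 := by
    intro i
    rw [hp, eval_prod]
    exact Finset.prod_eq_zero (Finset.mem_image_of_mem t (Finset.mem_univ i)) (by simp)
  have h0 : aeval (M * diagonal t * M⁻¹) p = 0 := by
    rw [aeval_conj hM, aeval_diagonal]
    simp only [heval]
    simp [diagonal_zero]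
  apply Module.End.isSemisimple_of_squarefree_aeval_eq_zero hsq
  rw [aeval_algHom_apply φ, h0]
  simp

lemma simul {E H : Mat n} (hE : (φ E).IsSemisimple) (hH : (φ H).IsSemisimple)
    (hc : Commute E H) :
    ∃ (M : Mat n) (e h : Fin n → ℂ), IsUnit M.det ∧
      E = M * diagonal e * M⁻¹ ∧ H = M * diagonal h * M⁻¹ := by
  classical
  set f := φ E with hf
  set g := φ H with hg
  have hcfg : Commute f g := hc.map (φ.toAlgHom : Mat n →ₐ[ℂ] Module.End ℂ (Fin n → ℂ))
  set F : Fin 2 → Module.End ℂ (Fin n → ℂ) := ![f, g] with hF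
  have hpair : Pairwise fun i j => Commute (F i) (F j) := by
    intro i j hij
    fin_cases i <;> fin_cases j <;> simp_all [hF] <;> exact (hc.map (φ.toAlgHom : Mat n →ₐ[ℂ] Module.End ℂ (Fin n → ℂ))).symm
  have key : ⨆ χ : Fin 2 → ℂ, ⨅ i, (F i).maxGenEigenspace (χ i) = ⊤ :=
    Module.End.iSup_iInf_maxGenEigenspace_eq_top_of_iSup_maxGenEigenspace_eq_top_of_commute F
      hpair (fun i => Module.End.iSup_maxGenEigenspace_eq_top _)
  set S : Set (Fin n → ℂ) := ⋃ χ : Fin 2 → ℂ, ↑(⨅ i, (F i).maxGenEigenspace (χ i)) with hS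
  have hspan : Submodule.span ℂ S = ⊤ := by
    rw [hS, ← Submodule.iSup_eq_span] at *
    exact key
  obtain ⟨b, hbS, hbspan, hbind⟩ := exists_linearIndependent ℂ S
  have hBtop : ⊤ ≤ Submodule.span ℂ (Set.range (Subtype.val : b → (Fin n → ℂ))) := by
    rw [Subtype.range_coe, hbspan, hspan]
  let B : Module.Basis b ℂ (Fin n → ℂ) := Module.Basis.mk hbind hBtop
  let B' : Module.Basis (Fin n) ℂ (Fin n → ℂ) := B.reindex (B.indexEquiv (Pi.basisFun ℂ (Fin n)))
  have hmem : ∀ k : Fin n, ∃ χ : Fin 2 → ℂ,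
      B' k ∈ ⨅ i, (F i).maxGenEigenspace (χ i) := by
    intro k
    have : (B' k : Fin n → ℂ) ∈ S := by
      have : B' k = B ((B.indexEquiv (Pi.basisFun ℂ (Fin n))).symm k) := by
        simp [B']
      rw [this]
      have := ((B.indexEquiv (Pi.basisFun ℂ (Fin n))).symm k)
      rw [show B = Module.Basis.mk hbind hBtop from rfl, Module.Basis.mk_apply]
      exact hbS (Subtype.mem _)
    simpa [hS] using this
  choose χ hχ using hmem
  set e : Fin n → ℂ := fun k => χ k 0 with he
  set h : Fin n → ℂ := fun k => χ k 1 with hh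
  have heig : ∀ k : Fin n, f (B' k) = e k • B' k ∧ g (B' k) = h k • B' k := by
    intro k
    have h0 := (Submodule.mem_iInf _).mp (hχ k) 0
    have h1 := (Submodule.mem_iInf _).mp (hχ k) 1
    rw [show F 0 = f from rfl,
      (hE.isFinitelySemisimple).maxGenEigenspace_eq_eigenspace] at h0
    rw [show F 1 = g from rfl,
      (hH.isFinitelySemisimple).maxGenEigenspace_eq_eigenspace] at h1
    exact ⟨Module.End.mem_eigenspace_iff.mp h0, Module.End.mem_eigenspace_iff.mp h1⟩
  have hdiagf : LinearMap.toMatrix B' B' f = diagonal e := by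
    ext i j
    rw [LinearMap.toMatrix_apply, (heig j).1, _root_.map_smul, B'.repr_self]
    by_cases hij : i = j
    · subst hij; simp
    · simp [hij, Ne.symm hij, Finsupp.single_apply]
  have hdiagg : LinearMap.toMatrix B' B' g = diagonal h := by
    ext i j
    rw [LinearMap.toMatrix_apply, (heig j).2, _root_.map_smul, B'.repr_self]
    by_cases hij : i = j
    · subst hij; simp
    · simp [hij, Ne.symm hij, Finsupp.single_apply]
  set c : Module.Basis (Fin n) ℂ (Fin n → ℂ) := Pi.basisFun ℂ (Fin n) with hcdef
  set M : Mat n := c.toMatrix B' with hM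
  have hMright : M * B'.toMatrix c = 1 := Module.Basis.toMatrix_mul_toMatrix_flip c B'
  have hMunit : IsUnit M.det := by
    have hdet : M.det * (B'.toMatrix ⇑c).det = 1 := by
      rw [← det_mul, hMright, det_one]
    exact IsUnit.of_mul_eq_one _ hdet
  have hMinv : M⁻¹ = B'.toMatrix c := inv_eq_right_inv hMright
  have hEeq : E = M * diagonal e * M⁻¹ := by
    have h1 := basis_toMatrix_mul_linearMap_toMatrix_mul_basis_toMatrix
      (b := c) (b' := B') (c := c) (c' := B') (f := f)
    rw [hdiagf] at h1
    rw [hMinv, hM]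
    rw [h1, hcdef, LinearMap.toMatrix_eq_toMatrix']
    exact (LinearMap.toMatrix'_toLin' E).symm
  have hHeq : H = M * diagonal h * M⁻¹ := by
    have h1 := basis_toMatrix_mul_linearMap_toMatrix_mul_basis_toMatrix
      (b := c) (b' := B') (c := c) (c' := B') (f := g)
    rw [hdiagg] at h1
    rw [hMinv, hM]
    rw [h1, hcdef, LinearMap.toMatrix_eq_toMatrix']
    exact (LinearMap.toMatrix'_toLin' H).symm
  exact ⟨M, e, h, hMunit, hEeq, hHeq⟩


open Polynomial in
lemma conj_mul_conj {M : Mat n} (hM : IsUnit M.det) (X Y : Mat n) :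
    (M * X * M⁻¹) * (M * Y * M⁻¹) = M * (X * Y) * M⁻¹ := by
  have h : M⁻¹ * M = 1 := nonsing_inv_mul M hM
  calc (M * X * M⁻¹) * (M * Y * M⁻¹) = M * X * (M⁻¹ * M) * Y * M⁻¹ := by
        simp only [mul_assoc]
  _ = M * (X * Y) * M⁻¹ := by rw [h, mul_one]; simp only [mul_assoc]

lemma det_conj {M : Mat n} (hM : IsUnit M.det) (X : Mat n) :
    (M * X * M⁻¹).det = X.det := by
  rw [det_mul, det_mul, Matrix.det_nonsing_inv]
  rw [mul_comm M.det X.det, mul_assoc, Ring.mul_inverse_cancel _ hM, mul_one]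

lemma commute_inv_right {X Y : Mat n} (h : IsUnit X.det) (hc : Commute Y X) :
    Commute Y X⁻¹ := by
  lift X to (Mat n)ˣ using (isUnit_iff_isUnit_det X).mpr h with u
  rw [← Matrix.coe_units_inv]
  exact hc.units_inv_right

lemma elliptic_isUnit_det {E : Mat n} (hE : Elliptic E) : IsUnit E.det := by
  obtain ⟨M, t, hM, ht, rfl⟩ := hE
  rw [det_conj hM, det_diagonal]
  refine isUnit_iff_ne_zero.mpr (Finset.prod_ne_zero_iff.mpr fun i _ => ?_)
  intro h0
  simpa [h0] using ht i

lemma elliptic_semisimple {E : Mat n} (hE : Elliptic E) : (φ E).IsSemisimple := by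
  obtain ⟨M, t, hM, ht, rfl⟩ := hE
  exact semisimple_of_diag hM t

lemma elliptic_spectrum_norm {E : Mat n} (hE : Elliptic E) :
    ∀ z ∈ spectrum ℂ E, ‖z‖ = 1 := by
  obtain ⟨M, t, hM, ht, rfl⟩ := hE
  intro z hz
  rw [spectrum_conj hM, spectrum_diagonal] at hz
  obtain ⟨i, rfl⟩ := hz
  exact ht i

lemma hyperbolic_isUnit_det {H : Mat n} (hH : Hyperbolic H) : IsUnit H.det := by
  obtain ⟨M, t, hM, ht, rfl⟩ := hH
  rw [det_conj hM, det_diagonal]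
  refine isUnit_iff_ne_zero.mpr (Finset.prod_ne_zero_iff.mpr fun i _ => ?_)
  simpa using (ht i).ne'

lemma hyperbolic_semisimple {H : Mat n} (hH : Hyperbolic H) : (φ H).IsSemisimple := by
  obtain ⟨M, t, hM, ht, rfl⟩ := hH
  exact semisimple_of_diag hM _

lemma hyperbolic_spectrum_pos {H : Mat n} (hH : Hyperbolic H) :
    ∀ z ∈ spectrum ℂ H, ∃ r : ℝ, 0 < r ∧ z = (r : ℂ) := by
  obtain ⟨M, t, hM, ht, rfl⟩ := hH
  intro z hz
  rw [spectrum_conj hM, spectrum_diagonal] at hz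
  obtain ⟨i, rfl⟩ := hz
  exact ⟨t i, ht i, rfl⟩

open Polynomial in
/-- Canonical recovery of the elliptic part via polynomial functional calculus. -/
lemma canon {E H : Mat n} (hE : Elliptic E) (hH : Hyperbolic H) (hc : Commute E H) :
    (spectrum ℂ (E * H)).Finite ∧
    ∀ p : ℂ[X], (∀ z ∈ spectrum ℂ (E * H), p.eval z = z / (‖z‖ : ℂ)) →
      E = aeval (E * H) p := by
  obtain ⟨M, e, h, hM, hEe, hHh⟩ := simul (elliptic_semisimple hE) (hyperbolic_semisimple hH) hc
  have hprod : E * H = M * diagonal (fun i => e i * h i) * M⁻¹ := by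
    rw [hEe, hHh, conj_mul_conj hM, diagonal_mul_diagonal]
  have hspec : spectrum ℂ (E * H) = Set.range (fun i => e i * h i) := by
    rw [hprod, spectrum_conj hM, spectrum_diagonal]
  have hespec : ∀ i, e i ∈ spectrum ℂ E := by
    intro i
    rw [hEe, spectrum_conj hM, spectrum_diagonal]
    exact ⟨i, rfl⟩
  have hhspec : ∀ i, h i ∈ spectrum ℂ H := by
    intro i
    rw [hHh, spectrum_conj hM, spectrum_diagonal]
    exact ⟨i, rfl⟩
  refine ⟨hspec ▸ Set.finite_range _, fun p hp => ?_⟩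
  have heval : ∀ i, p.eval (e i * h i) = e i := by
    intro i
    obtain ⟨r, hr, hri⟩ := hyperbolic_spectrum_pos hH _ (hhspec i)
    have hnorm : ‖e i‖ = 1 := elliptic_spectrum_norm hE _ (hespec i)
    have := hp (e i * h i) (hspec ▸ ⟨i, rfl⟩)
    rw [this, hri, norm_mul, hnorm, one_mul, Complex.norm_real,
      Real.norm_eq_abs, abs_of_pos hr, mul_div_assoc, div_self, mul_one]
    exact_mod_cast hr.ne'
  rw [hprod, aeval_conj hM, aeval_diagonal]
  simp only [heval]
  rw [← hEe]

open Polynomial Module in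
lemma jc_unique {f s m s' m' : Module.End ℂ (Fin n → ℂ)}
    (hs : s.IsSemisimple) (hm : IsNilpotent m) (hcm : Commute s m) (hsum : f = s + m)
    (hs' : s'.IsSemisimple) (hm' : IsNilpotent m') (hcm' : Commute s' m')
    (hsum' : f = s' + m') : s = s' := by
  obtain ⟨n₀, hn₀mem, s₀, hs₀mem, hn₀, hs₀, hf⟩ :=
    Module.End.exists_isNilpotent_isSemisimple (f := f)
  suffices Hmain : ∀ t u : Module.End ℂ (Fin n → ℂ),
      t.IsSemisimple → IsNilpotent u → Commute t u → f = t + u → t = s₀ by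
    rw [Hmain s m hs hm hcm hsum, Hmain s' m' hs' hm' hcm' hsum']
  intro t u ht hu hcu hft
  have hctf : Commute t f := by rw [hft]; exact (Commute.refl t).add_right hcu
  have hcts₀ : Commute t s₀ := Algebra.commute_of_mem_adjoin_singleton_of_commute hs₀mem hctf
  have hcuf : Commute u f := by rw [hft]; exact hcu.symm.add_right (Commute.refl u)
  have hcun₀ : Commute u n₀ := Algebra.commute_of_mem_adjoin_singleton_of_commute hn₀mem hcuf
  have hsub : t - s₀ = n₀ - u := by
    rw [sub_eq_sub_iff_add_eq_add, ← hft, hf, add_comm]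
  have hss : (t - s₀).IsSemisimple := Module.End.IsSemisimple.sub_of_commute hcts₀ ht hs₀
  have hnil : IsNilpotent (t - s₀) := hsub ▸ hcun₀.symm.isNilpotent_sub hn₀ hu
  have := Module.End.eq_zero_of_isNilpotent_isSemisimple hnil hss
  rwa [sub_eq_zero] at this

open Polynomial in
lemma exists_decomp (A : Mat n) (hA : IsUnit A.det) :
    ∃ E H U : Mat n, Elliptic E ∧ Hyperbolic H ∧ Unipotent U ∧
      E * H = H * E ∧ E * U = U * E ∧ H * U = U * H ∧ A = E * H * U := by
  classical
  obtain ⟨nE, hnmem, sE, hsmem, hnil, hss, hf⟩ :=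
    Module.End.exists_isNilpotent_isSemisimple (f := φ A)
  set N : Mat n := φ.symm nE with hNdef
  set S : Mat n := φ.symm sE with hSdef
  have hφS : φ S = sE := by simp [hSdef]
  have hφN : φ N = nE := by simp [hNdef]
  have hANS : A = N + S := by
    apply φ.injective
    rw [map_add, hφS, hφN, hf]
  have hNnil : IsNilpotent N := by
    have := hnil.map (φ.symm.toAlgHom : Module.End ℂ (Fin n → ℂ) →ₐ[ℂ] Mat n)
    simpa [hNdef] using this
  have hcommNS : Commute N S := by
    have h1 : Commute nE sE := Algebra.commute_of_mem_adjoin_singleton_of_commute hsmem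
      ((Algebra.commute_of_mem_adjoin_self hnmem).symm)
    have := h1.map (φ.symm.toAlgHom : Module.End ℂ (Fin n → ℂ) →ₐ[ℂ] Mat n)
    simpa [hNdef, hSdef] using this
  have hAunit : IsUnit A := (isUnit_iff_isUnit_det A).mpr hA
  have hcommAN : Commute A N := by
    have h1 : Commute (φ A) nE := Algebra.commute_of_mem_adjoin_self hnmem
    have := h1.map (φ.symm.toAlgHom : Module.End ℂ (Fin n → ℂ) →ₐ[ℂ] Mat n)
    simpa [hNdef] using this
  have hcAinvN : Commute A⁻¹ N := (commute_inv_right hA hcommAN.symm).symm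
  have hSA : S = A * (1 - A⁻¹ * N) := by
    rw [mul_sub, mul_one, ← mul_assoc, mul_nonsing_inv _ hA, one_mul, hANS,
      add_sub_cancel_left]
  have hSunit : IsUnit S := by
    rw [hSA]
    exact hAunit.mul ((hcAinvN.isNilpotent_mul_left hNnil).isUnit_one_sub)
  have hSdetu : IsUnit S.det := (isUnit_iff_isUnit_det S).mp hSunit
  have hone : ((1 : Module.End ℂ (Fin n → ℂ))).IsSemisimple := Module.End.isSemisimple_id
  have hφSss : (φ S).IsSemisimple := by rw [hφS]; exact hss
  have hφ1ss : (φ (1 : Mat n)).IsSemisimple := by rw [_root_.map_one (φ : Mat n ≃ₐ[ℂ] Module.End ℂ (Fin n → ℂ))]; exact hone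
  obtain ⟨M, t, t', hM, hSrep, -⟩ := simul hφSss hφ1ss (Commute.one_right S)
  have htne : ∀ i, t i ≠ 0 := by
    intro i h0
    have hz : S.det = 0 := by
      rw [hSrep, det_conj hM, det_diagonal]
      exact Finset.prod_eq_zero (Finset.mem_univ i) h0
    rw [hz] at hSdetu
    exact not_isUnit_zero hSdetu
  set e : Fin n → ℂ := fun i => t i / (‖t i‖ : ℂ) with hedef
  set h : Fin n → ℝ := fun i => ‖t i‖ with hhdef
  have hcast : ∀ i, ((h i : ℝ) : ℂ) ≠ 0 := by
    intro i
    simpa [hhdef] using htne i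
  set E : Mat n := M * diagonal e * M⁻¹ with hEdef
  set Hm : Mat n := M * diagonal (fun i => ((h i : ℝ) : ℂ)) * M⁻¹ with hHmdef
  have heh : ∀ i, e i * ((h i : ℝ) : ℂ) = t i := by
    intro i
    rw [hedef, hhdef]
    exact div_mul_cancel₀ _ (hcast i)
  have hEH : E * Hm = S := by
    have hfun : (fun i => e i * ((h i : ℝ) : ℂ)) = t := funext heh
    rw [hEdef, hHmdef, conj_mul_conj hM, diagonal_mul_diagonal, hfun, hSrep]
  have hell : Elliptic E := by
    refine ⟨M, e, hM, fun i => ?_, rfl⟩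
    rw [hedef]
    simp only [norm_div, Complex.norm_real, Real.norm_eq_abs, abs_norm]
    exact div_self (by simpa using htne i)
  have hhyp : Hyperbolic Hm := ⟨M, h, hM, fun i => by simpa [hhdef] using (htne i), rfl⟩
  set U : Mat n := 1 + S⁻¹ * N with hUdef
  have hcSN : Commute S N := hcommNS.symm
  have hSinvN : Commute S⁻¹ N := (commute_inv_right hSdetu hcommNS).symm
  have hUni : Unipotent U := by
    show IsNilpotent (U - 1)
    rw [hUdef, add_sub_cancel_left]
    exact hSinvN.isNilpotent_mul_left hNnil
  have hadj : ∀ q : ℂ[X], Commute N (aeval S q) := fun q =>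
    Algebra.commute_of_mem_adjoin_singleton_of_commute (aeval_mem_adjoin_singleton ℂ S) hcSN.symm
  have hinj : Set.InjOn (id : ℂ → ℂ) ↑(Finset.image t Finset.univ) := Set.injOn_id _
  set q : ℂ[X] := Lagrange.interpolate (Finset.image t Finset.univ) id
    (fun z => z / (‖z‖ : ℂ)) with hqdef
  set r : ℂ[X] := Lagrange.interpolate (Finset.image t Finset.univ) id
    (fun z => ((‖z‖ : ℝ) : ℂ)) with hrdef
  have hqeval : ∀ i, q.eval (t i) = e i := by
    intro i
    have := Lagrange.eval_interpolate_at_node (v := id) (s := Finset.image t Finset.univ)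
      (fun z => z / (‖z‖ : ℂ)) hinj (Finset.mem_image_of_mem t (Finset.mem_univ i))
    exact this
  have hreval : ∀ i, r.eval (t i) = ((h i : ℝ) : ℂ) := by
    intro i
    have := Lagrange.eval_interpolate_at_node (v := id) (s := Finset.image t Finset.univ)
      (fun z => ((‖z‖ : ℝ) : ℂ)) hinj (Finset.mem_image_of_mem t (Finset.mem_univ i))
    exact this
  have hEaeval : E = aeval S q := by
    rw [hSrep, aeval_conj hM, aeval_diagonal]
    simp only [hqeval]
    rfl
  have hHaeval : Hm = aeval S r := by
    rw [hSrep, aeval_conj hM, aeval_diagonal]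
    simp only [hreval]
    rfl
  have hNE : Commute N E := hEaeval ▸ hadj q
  have hNH : Commute N Hm := hHaeval ▸ hadj r
  have hEHm : Commute E Hm := by
    show E * Hm = Hm * E
    rw [hEdef, hHmdef, conj_mul_conj hM, conj_mul_conj hM, diagonal_mul_diagonal,
      diagonal_mul_diagonal]
    have hfun2 : (fun i => e i * ((h i : ℝ) : ℂ)) = fun i => ((h i : ℝ) : ℂ) * e i := by
      funext i; ring
    rw [hfun2]
  have hcES : Commute E S := by
    rw [← hEH]; exact (Commute.refl E).mul_right hEHm
  have hcHS : Commute Hm S := by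
    rw [← hEH]; exact hEHm.symm.mul_right (Commute.refl Hm)
  have hcEU : Commute E U := by
    rw [hUdef]
    exact (Commute.one_right E).add_right ((commute_inv_right hSdetu hcES).mul_right hNE.symm)
  have hcHU : Commute Hm U := by
    rw [hUdef]
    exact (Commute.one_right Hm).add_right ((commute_inv_right hSdetu hcHS).mul_right hNH.symm)
  have hAEHU : A = E * Hm * U := by
    rw [hEH, hUdef, mul_add, mul_one, ← mul_assoc, mul_nonsing_inv _ hSdetu, one_mul, hANS,
      add_comm]
  exact ⟨E, Hm, U, hell, hhyp, hUni, hEHm, hcEU, hcHU, hAEHU⟩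

open Polynomial in
lemma uniq {E H U E' H' U' : Mat n}
    (hE : Elliptic E) (hH : Hyperbolic H) (hU : Unipotent U)
    (cEH : E * H = H * E) (cEU : E * U = U * E) (cHU : H * U = U * H)
    (hE' : Elliptic E') (hH' : Hyperbolic H') (hU' : Unipotent U')
    (cEH' : E' * H' = H' * E') (cEU' : E' * U' = U' * E') (cHU' : H' * U' = U' * H')
    (heq : E * H * U = E' * H' * U') : E = E' ∧ H = H' ∧ U = U' := by
  classical
  have hcEH : Commute E H := cEH
  have hcEH' : Commute E' H' := cEH'
  set S := E * H with hSdef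
  set S' := E' * H' with hS'def
  have hSss : (φ S).IsSemisimple := by
    rw [hSdef, _root_.map_mul]
    exact Module.End.IsSemisimple.mul_of_commute
      (hcEH.map (φ.toAlgHom : Mat n →ₐ[ℂ] Module.End ℂ (Fin n → ℂ)))
      (elliptic_semisimple hE) (hyperbolic_semisimple hH)
  have hS'ss : (φ S').IsSemisimple := by
    rw [hS'def, _root_.map_mul]
    exact Module.End.IsSemisimple.mul_of_commute
      (hcEH'.map (φ.toAlgHom : Mat n →ₐ[ℂ] Module.End ℂ (Fin n → ℂ)))
      (elliptic_semisimple hE') (hyperbolic_semisimple hH')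
  have hSU : Commute S U := Commute.mul_left (cEU : Commute E U) (cHU : Commute H U)
  have hS'U' : Commute S' U' := Commute.mul_left (cEU' : Commute E' U') (cHU' : Commute H' U')
  have hSdetu : IsUnit S.det := by
    rw [hSdef, det_mul]
    exact (elliptic_isUnit_det hE).mul (hyperbolic_isUnit_det hH)
  have hdec : φ (E * H * U) = φ S + φ (S * (U - 1)) := by
    rw [← map_add]
    congr 1
    rw [mul_sub, mul_one, add_sub_cancel]
  have hdec' : φ (E * H * U) = φ S' + φ (S' * (U' - 1)) := by
    rw [heq, ← map_add]
    congr 1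
    rw [mul_sub, mul_one, add_sub_cancel]
  have hnilN : IsNilpotent (φ (S * (U - 1))) := by
    have : IsNilpotent (S * (U - 1)) :=
      (hSU.sub_right (Commute.one_right S)).isNilpotent_mul_left hU
    exact this.map (φ.toAlgHom : Mat n →ₐ[ℂ] Module.End ℂ (Fin n → ℂ))
  have hnilN' : IsNilpotent (φ (S' * (U' - 1))) := by
    have : IsNilpotent (S' * (U' - 1)) :=
      (hS'U'.sub_right (Commute.one_right S')).isNilpotent_mul_left hU'
    exact this.map (φ.toAlgHom : Mat n →ₐ[ℂ] Module.End ℂ (Fin n → ℂ))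
  have hcsn : Commute (φ S) (φ (S * (U - 1))) := by
    have : Commute S (S * (U - 1)) :=
      (Commute.refl S).mul_right (hSU.sub_right (Commute.one_right S))
    exact this.map (φ.toAlgHom : Mat n →ₐ[ℂ] Module.End ℂ (Fin n → ℂ))
  have hcsn' : Commute (φ S') (φ (S' * (U' - 1))) := by
    have : Commute S' (S' * (U' - 1)) :=
      (Commute.refl S').mul_right (hS'U'.sub_right (Commute.one_right S'))
    exact this.map (φ.toAlgHom : Mat n →ₐ[ℂ] Module.End ℂ (Fin n → ℂ))
  have hSeq : S = S' := by
    apply φ.injective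
    exact jc_unique hSss hnilN hcsn hdec hS'ss hnilN' hcsn' hdec'
  have hSS : E * H = E' * H' := by
    rw [← hSdef, ← hS'def]; exact hSeq
  have hUeq : U = U' := by
    have h1 : S * U = S * U' := by
      rw [heq, ← hSeq]
    calc U = S⁻¹ * (S * U) := by rw [← mul_assoc, nonsing_inv_mul _ hSdetu, one_mul]
    _ = S⁻¹ * (S * U') := by rw [h1]
    _ = U' := by rw [← mul_assoc, nonsing_inv_mul _ hSdetu, one_mul]
  obtain ⟨hfin, hcanon⟩ := canon hE hH hcEH
  obtain ⟨hfin', hcanon'⟩ := canon hE' hH' hcEH'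
  set p : ℂ[X] := Lagrange.interpolate hfin.toFinset id (fun z => z / (‖z‖ : ℂ)) with hpdef
  have hpeval : ∀ z ∈ spectrum ℂ (E * H), p.eval z = z / (‖z‖ : ℂ) := by
    intro z hz
    have := Lagrange.eval_interpolate_at_node (v := id) (s := hfin.toFinset)
      (fun z => z / (‖z‖ : ℂ)) (Set.injOn_id _) (hfin.mem_toFinset.mpr hz)
    exact this
  have hpeval' : ∀ z ∈ spectrum ℂ (E' * H'), p.eval z = z / (‖z‖ : ℂ) := by
    rw [← hSS]
    exact hpeval
  have hEeq : E = E' := by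
    rw [hcanon p hpeval, hcanon' p hpeval', ← hSS]
  have hHeq : H = H' := by
    have hEdetu : IsUnit E.det := elliptic_isUnit_det hE
    have h1 : E * H = E * H' := by
      have h2 : E * H' = E' * H' := by rw [hEeq]
      rw [h2, ← hSS]
    calc H = E⁻¹ * (E * H) := by rw [← mul_assoc, nonsing_inv_mul _ hEdetu, one_mul]
    _ = E⁻¹ * (E * H') := by rw [h1]
    _ = H' := by rw [← mul_assoc, nonsing_inv_mul _ hEdetu, one_mul]
  exact ⟨hEeq, hHeq, hUeq⟩

end CMJD

/-- Complete multiplicative Jordan decomposition: every invertible complex matrix `A` has a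
unique decomposition `A = E * H * U` with `E` elliptic, `H` hyperbolic, `U` unipotent,
and `E, H, U` pairwise commuting. -/
theorem cmjd_exists_unique {n : ℕ} (A : Matrix (Fin n) (Fin n) ℂ) (hA : IsUnit A.det) :
    ∃! EHU : Matrix (Fin n) (Fin n) ℂ × Matrix (Fin n) (Fin n) ℂ × Matrix (Fin n) (Fin n) ℂ,
      Elliptic EHU.1 ∧ Hyperbolic EHU.2.1 ∧ Unipotent EHU.2.2 ∧
      EHU.1 * EHU.2.1 = EHU.2.1 * EHU.1 ∧
      EHU.1 * EHU.2.2 = EHU.2.2 * EHU.1 ∧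
      EHU.2.1 * EHU.2.2 = EHU.2.2 * EHU.2.1 ∧
      A = EHU.1 * EHU.2.1 * EHU.2.2 := by
  obtain ⟨E, H, U, hell, hhyp, huni, c1, c2, c3, hprod⟩ := CMJD.exists_decomp A hA
  refine ⟨(E, H, U), ⟨hell, hhyp, huni, c1, c2, c3, hprod⟩, ?_⟩
  rintro ⟨E', H', U'⟩ ⟨hell', hhyp', huni', c1', c2', c3', hprod'⟩
  obtain ⟨h1, h2, h3⟩ := CMJD.uniq hell' hhyp' huni' c1' c2' c3' hell hhyp huni c1 c2 c3
    (by rw [← hprod, ← hprod'])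
  simp only [Prod.mk.injEq]
  exact ⟨h1, h2, h3⟩
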